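/- arXiv:2605.12692 — 4 statements merged into one kernel-verified Lean document; each statement's English description precedes it below -/
import Mathlib

section
/- Let Q be a finite quandle, let n = |Inn(Q)|, and let Z₀ be the subgroup of the enveloping group G(Q) generated by the elements φ_Q(x)^n for x ∈ Q. Then Z₀ is contained in the centre of G(Q), and Z₀ has finite index in G(Q). -/
/-!
`G(Q)` acts on `Q` through `Inn(Q)` with `g φ(y) g⁻¹ = φ(g • y)`, so the kernel of this action is
central of finite index, and it contains every `φ(x)^n` because `L_x^n = 1` in `Inn(Q)`.
Hence the centre of `H = G(Q) ⧸ Z₀` has finite index, and `H` is generated by finitely many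
elements of order dividing `n`. For the transfer `T : H → Z(H)`, `h ↦ h^[H : Z(H)]`, the map
`h ↦ T(h)^n` is a homomorphism into an abelian group vanishing on the generators, so `H` has
exponent dividing `[H : Z(H)] * n`. Thus `Z(H)`, finitely generated by Schreier's lemma, is a
finite abelian group, and `H` is finite.
-/

open Quandles

/-- The inner automorphism group of a quandle `Q`: the subgroup of the permutation
group of `Q` generated by the left translations `L_x : y ↦ x ◃ y`. -/
def innQ (Q : Type) [Quandle Q] : Subgroup (Equiv.Perm Q) :=
  Subgroup.closure (Set.range (Rack.act' : Q → Q ≃ Q))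

namespace Subgroup

variable {G G' : Type*} [Group G] [Group G']

theorem normal_of_le_center {H : Subgroup G} (h : H ≤ center G) : H.Normal :=
  ⟨fun a ha g => by rwa [mem_center_iff.1 (h ha) g, mul_inv_cancel_right]⟩

theorem map_center_le_center {f : G →* G'} (hf : Function.Surjective f) :
    (center G).map f ≤ center G' := by
  rintro _ ⟨z, hz, rfl⟩
  refine mem_center_iff.2 fun g' => ?_
  obtain ⟨g, rfl⟩ := hf g'
  rw [← map_mul, mem_center_iff.1 hz, map_mul]

theorem finiteIndex_center_of_surjective [(center G).FiniteIndex] {f : G →* G'}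
    (hf : Function.Surjective f) : (center G').FiniteIndex :=
  have : ((center G).map f).FiniteIndex :=
    ⟨ne_zero_of_dvd_ne_zero FiniteIndex.index_ne_zero (index_map_dvd _ hf)⟩
  finiteIndex_of_le (map_center_le_center hf)

open scoped IsMulCommutative

theorem pow_index_center_mul_eq_one [(center G).FiniteIndex] {S : Set G}
    (hS : closure S = ⊤) {n : ℕ} (hpow : ∀ s ∈ S, s ^ n = 1) (g : G) :
    g ^ ((center G).index * n) = 1 := by
  have h : (powMonoidHom n).comp (MonoidHom.transferCenterPow G) = 1 :=
    MonoidHom.eq_of_eqOn_dense hS fun s hs => by simp [← map_pow, hpow s hs]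
  simpa [pow_mul] using congrArg Subtype.val (DFunLike.congr_fun h g)

theorem _root_.Group.finite_of_fg_isMulTorsion [Group.FG G] [(center G).FiniteIndex]
    (hG : IsMulTorsion G) : Finite G := by
  have : Finite (center G) := CommGroup.finite_of_fg_isMulTorsion (center G) fun z =>
    Submonoid.isOfFinOrder_coe.1 (hG z)
  exact Nat.finite_of_card_ne_zero <| (center G).card_mul_index ▸
    mul_ne_zero Nat.card_pos.ne' FiniteIndex.index_ne_zero

theorem _root_.Group.finite_of_closure_eq_top_of_pow_eq_one [(center G).FiniteIndex]
    {S : Set G} (hSfin : S.Finite) (hS : closure S = ⊤) {n : ℕ} (hn : n ≠ 0)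
    (hpow : ∀ s ∈ S, s ^ n = 1) : Finite G :=
  have : Group.FG G := Group.fg_iff.2 ⟨S, hS, hSfin⟩
  Group.finite_of_fg_isMulTorsion fun g => isOfFinOrder_iff_pow_eq_one.2
    ⟨_, Nat.pos_of_ne_zero (mul_ne_zero FiniteIndex.index_ne_zero hn),
      pow_index_center_mul_eq_one hS hpow g⟩

end Subgroup

namespace Rack

open Subgroup

section

variable {R : Type*} [Rack R]

theorem closure_range_toEnvelGroup :
    closure (Set.range fun x : R => (toEnvelGroup R x : EnvelGroup R)) = ⊤ := by
  rw [eq_top_iff]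
  rintro g -
  induction g using Quotient.inductionOn with
  | h a =>
    induction a with
    | unit => exact one_mem _
    | incl x => exact subset_closure ⟨x, rfl⟩
    | mul a b iha ihb => exact mul_mem iha ihb
    | inv a iha => exact inv_mem iha

theorem conj_toEnvelGroup (g : EnvelGroup R) (y : R) :
    g * toEnvelGroup R y * g⁻¹ = toEnvelGroup R (envelAction g y) := by
  have hg : g ∈ closure (Set.range fun x : R => (toEnvelGroup R x : EnvelGroup R)) :=
    closure_range_toEnvelGroup (R := R) ▸ mem_top g
  induction hg using closure_induction generalizing y with
  | mem _ hx =>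
    obtain ⟨x, rfl⟩ := hx
    exact ((toEnvelGroup R).map_act' (x := x) (y := y)).symm
  | one => simp
  | mul a b _ _ iha ihb => rw [map_mul, Equiv.Perm.mul_apply, ← iha, ← ihb]; group
  | inv a _ iha =>
    have h := iha (envelAction a⁻¹ y)
    rw [← Equiv.Perm.mul_apply, ← map_mul, mul_inv_cancel, map_one, Equiv.Perm.one_apply] at h
    rw [← h]
    group

theorem ker_envelAction_le_center :
    (envelAction : EnvelGroup R →* R ≃ R).ker ≤ center (EnvelGroup R) := by
  intro g hg
  rw [← centralizer_univ, ← coe_top, ← closure_range_toEnvelGroup, centralizer_closure]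
  rintro _ ⟨y, rfl⟩
  have h := conj_toEnvelGroup g y
  rw [MonoidHom.mem_ker.1 hg, Equiv.Perm.one_apply, mul_inv_eq_iff_eq_mul] at h
  exact h.symm

instance finiteIndex_center_envelGroup [Finite R] : (center (EnvelGroup R)).FiniteIndex :=
  finiteIndex_of_le ker_envelAction_le_center

end

theorem toEnvelGroup_pow_card_innQ_mem_ker (Q : Type) [Quandle Q] (x : Q) :
    (toEnvelGroup Q x : EnvelGroup Q) ^ Nat.card (innQ Q) ∈
      (envelAction : EnvelGroup Q →* Q ≃ Q).ker := by
  rw [MonoidHom.mem_ker, map_pow, ← orderOf_dvd_iff_pow_eq_one]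
  exact (innQ Q).orderOf_dvd_natCard (subset_closure ⟨x, rfl⟩)

end Rack

/-- Let `Q` be a finite quandle, `n = |Inn(Q)|` and `Z₀` the subgroup of `G(Q)` generated
by the elements `φ_Q(x)^n` for `x ∈ Q`.  Then `Z₀` is central and of finite index. -/
theorem envelGroup_central_subgroup_finite_index (Q : Type) [Quandle Q] [Finite Q]
    (n : ℕ) (hn : n = Nat.card (innQ Q))
    (Z₀ : Subgroup (Rack.EnvelGroup Q))
    (hZ₀ : Z₀ = Subgroup.closure {g : Rack.EnvelGroup Q |
      ∃ x : Q, g = (Rack.toEnvelGroup Q x : Rack.EnvelGroup Q) ^ n}) :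
    Z₀ ≤ Subgroup.center (Rack.EnvelGroup Q) ∧ Z₀.FiniteIndex := by
  have hcentral : Z₀ ≤ Subgroup.center (Rack.EnvelGroup Q) := by
    rw [hZ₀, Subgroup.closure_le]
    rintro _ ⟨x, rfl⟩
    exact Rack.ker_envelAction_le_center (hn ▸ Rack.toEnvelGroup_pow_card_innQ_mem_ker Q x)
  refine ⟨hcentral, ?_⟩
  have := Subgroup.normal_of_le_center hcentral
  let π := QuotientGroup.mk' Z₀
  have := Subgroup.finiteIndex_center_of_surjective (QuotientGroup.mk'_surjective Z₀)
  have hgen : Subgroup.closure (Set.range fun x : Q => π (Rack.toEnvelGroup Q x)) = ⊤ := by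
    rw [Set.range_comp' π, ← MonoidHom.map_closure, Rack.closure_range_toEnvelGroup,
      Subgroup.map_top_of_surjective π (QuotientGroup.mk'_surjective Z₀)]
  have hpow : ∀ s ∈ Set.range fun x : Q => π (Rack.toEnvelGroup Q x), s ^ n = 1 := by
    rintro _ ⟨x, rfl⟩
    rw [← map_pow, QuotientGroup.mk'_apply, QuotientGroup.eq_one_iff, hZ₀]
    exact Subgroup.subset_closure ⟨x, rfl⟩
  have := Group.finite_of_closure_eq_top_of_pow_eq_one (Set.finite_range _) hgen
    (hn ▸ Nat.card_pos.ne') hpow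
  exact Subgroup.finiteIndex_of_finite_quotient
end

section
/- Let Q be a finite quandle and ρ : Q → GL(V) a quandle representation on a finite-dimensional complex vector space V. Then ρ is completely reducible if and only if ρ(x) is diagonalizable for every x ∈ Q. -/
open Quandles

/-- `ρ` is a quandle representation: `ρ(x ◃ y) = ρ(x) ρ(y) ρ(x)⁻¹`. -/
def IsQuandleRep {Q : Type} [Quandle Q] {V : Type} [AddCommGroup V] [Module ℂ V]
    (ρ : Q → V ≃ₗ[ℂ] V) : Prop :=
  ∀ x y : Q, ρ (x ◃ y) = ρ x * ρ y * (ρ x)⁻¹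

/-- `W` is a subrepresentation of the quandle representation `ρ`. -/
def IsSubrep {Q : Type} [Quandle Q] {V : Type} [AddCommGroup V] [Module ℂ V]
    (ρ : Q → V ≃ₗ[ℂ] V) (W : Submodule ℂ V) : Prop :=
  ∀ x : Q, ∀ v ∈ W, ρ x v ∈ W

/-- The quandle representation `ρ` is completely reducible: `V` is the internal direct
sum of a family of irreducible subrepresentations. -/
def CompletelyReducibleQuandleRep {Q : Type} [Quandle Q] {V : Type} [AddCommGroup V]
    [Module ℂ V] (ρ : Q → V ≃ₗ[ℂ] V) : Prop :=
  ∃ (ι : Type) (W : ι → Submodule ℂ V),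
    iSupIndep W ∧ iSup W = ⊤ ∧
    ∀ i : ι, IsSubrep ρ (W i) ∧
      ∀ U : Submodule ℂ V, U ≤ W i → IsSubrep ρ U → U = ⊥ ∨ U = W i

/-- A linear endomorphism of a complex vector space is diagonalizable if the space
admits a basis of eigenvectors. -/
def IsDiagonalizable {V : Type} [AddCommGroup V] [Module ℂ V] (f : V →ₗ[ℂ] V) : Prop :=
  ∃ (ι : Type) (b : Module.Basis ι ℂ V), ∀ i : ι, ∃ μ : ℂ, f (b i) = μ • b i

/-!
Let `M = |Sym(Q)|`. Since `ρ(x)^k ρ(y) ρ(x)^{-k} = ρ(L_x^k y)`, every `ρ(x)^M` commutes with all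
of `ρ(Q)`. Subrepresentations are the submodules over the algebra `A` generated by `ρ(Q)`, so
complete reducibility means that `V` is a semisimple `A`-module.

If `V` is semisimple, `ρ(x)^M` acts on each simple summand by a scalar `μ ≠ 0` (Schur), so there
`ρ(x)` is killed by the separable polynomial `X^M - μ` and is diagonalizable.

Conversely, if every `ρ(x)` is diagonalizable, `V` is the sum of the joint eigenspaces `V_χ` of the
commuting semisimple operators `ρ(x)^M`; they are subrepresentations, and `χ(x ◃ y) = χ(y)`.
Choosing `c(x)` with `c(x)^M = χ(x)` as a function of `χ(x)` alone, the operators `c(x)⁻¹ ρ(x)` on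
`V_χ` form a conjugation-closed set of elements of order dividing `M`. By Dietzmann's lemma they
generate a finite group, and Maschke's theorem for it makes `V_χ` semisimple.
-/

section Dietzmann

variable {G : Type*} [Group G]

lemma List.exists_prod_eq_mul_pow_count [DecidableEq G] {T : Set G}
    (hconj : ∀ s ∈ T, ∀ t ∈ T, s * t * s⁻¹ ∈ T) {t : G} (ht : t ∈ T) :
    ∀ l : List G, (∀ y ∈ l, y ∈ T) → ∃ l' : List G, (∀ y ∈ l', y ∈ T) ∧
      l'.length + l.count t = l.length ∧ l.prod = l'.prod * t ^ l.count t
  | [], _ => ⟨[], by simp⟩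
  | a :: l, hl => by
    obtain ⟨l', hl'T, hlen, hprod⟩ :=
      List.exists_prod_eq_mul_pow_count hconj ht l fun y hy ↦ hl y (List.mem_cons_of_mem a hy)
    by_cases ha : a = t
    · subst ha
      refine ⟨l'.map (MulAut.conj a), ?_, ?_, ?_⟩
      · simpa using fun y hy ↦ hconj a ht y (hl'T y hy)
      · simp only [List.length_map, List.count_cons_self, List.length_cons]; omega
      · rw [List.prod_cons, List.count_cons_self, hprod, ← map_list_prod]
        simp [MulAut.conj_apply, pow_succ', mul_assoc]
    · refine ⟨a :: l', ?_, ?_, ?_⟩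
      · simpa using ⟨hl a (by simp), hl'T⟩
      · simp only [List.length_cons, List.count_cons_of_ne ha, ← hlen]; omega
      · rw [List.prod_cons, List.count_cons_of_ne ha, hprod, List.prod_cons, mul_assoc]

lemma List.exists_length_le_prod_eq {T : Set G} (hT : T.Finite) {n : ℕ} (hn : n ≠ 0)
    (hpow : ∀ t ∈ T, t ^ n = 1) (hconj : ∀ s ∈ T, ∀ t ∈ T, s * t * s⁻¹ ∈ T)
    (l : List G) (hl : ∀ y ∈ l, y ∈ T) : ∃ l' : List G, (∀ y ∈ l', y ∈ T) ∧
      l'.length ≤ (n - 1) * hT.toFinset.card ∧ l'.prod = l.prod := by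
  classical
  induction hlen : l.length using Nat.strong_induction_on generalizing l with
  | _ N ih =>
    by_cases hshort : l.length ≤ (n - 1) * hT.toFinset.card
    · exact ⟨l, hl, hshort, rfl⟩
    obtain ⟨t, htT, htl⟩ : ∃ t ∈ hT.toFinset, n ≤ l.count t := by
      by_contra! hcount
      have hsum : ∑ t ∈ hT.toFinset, (l : Multiset G).count t = l.length :=
        Multiset.sum_count_eq_card (by simpa using hl)
      have := Finset.sum_le_card_nsmul hT.toFinset _ (n - 1) fun t ht ↦
        Nat.le_sub_one_of_lt (by simpa using hcount t ht)
      simp only [Multiset.coe_count, smul_eq_mul] at hsum this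
      rw [mul_comm] at this
      omega
    rw [Set.Finite.mem_toFinset] at htT
    obtain ⟨l', hl'T, hl'len, hprod⟩ := List.exists_prod_eq_mul_pow_count hconj htT l hl
    have hpow_mod : t ^ l.count t = t ^ (l.count t % n) := by
      conv_lhs => rw [← Nat.mod_add_div (l.count t) n]
      rw [pow_add, pow_mul, hpow t htT, one_pow, mul_one]
    obtain ⟨l'', hl''T, hl''len, hl''prod⟩ :=
      ih (l' ++ List.replicate (l.count t % n) t).length
        (by
          simp only [List.length_append, List.length_replicate]
          have := Nat.mod_lt (l.count t) (Nat.pos_of_ne_zero hn)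
          omega) _
        (fun y hy ↦ (List.mem_append.mp hy).elim (hl'T y)
          fun hy ↦ List.eq_of_mem_replicate hy ▸ htT) rfl
    exact ⟨l'', hl''T, hl''len, by rw [hl''prod, hprod, hpow_mod, List.prod_append,
      List.prod_replicate]⟩

/-- Dietzmann's lemma. -/
theorem Subgroup.finite_closure_of_conj_mem {T : Set G} (hT : T.Finite) {n : ℕ} (hn : n ≠ 0)
    (hpow : ∀ t ∈ T, t ^ n = 1) (hconj : ∀ s ∈ T, ∀ t ∈ T, s * t * s⁻¹ ∈ T) :
    (Subgroup.closure T : Set G).Finite := by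
  have hfin : ∀ t ∈ T, IsOfFinOrder t := fun t ht ↦
    isOfFinOrder_iff_pow_eq_one.mpr ⟨n, Nat.pos_of_ne_zero hn, hpow t ht⟩
  have : Finite T := hT
  refine ((List.finite_length_le T ((n - 1) * hT.toFinset.card)).image
    fun l ↦ (l.map Subtype.val).prod).subset fun g hg ↦ ?_
  have hg' : g ∈ (Subgroup.closure T).toSubmonoid := hg
  rw [Subgroup.closure_toSubmonoid_of_isOfFinOrder hfin] at hg'
  obtain ⟨l, hlT, rfl⟩ := Submonoid.exists_list_of_mem_closure hg'
  obtain ⟨l', hl'T, hlen, hprod⟩ := List.exists_length_le_prod_eq hT hn hpow hconj l hlT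
  refine ⟨l'.attach.map fun y ↦ ⟨y.1, hl'T y.1 y.2⟩, by simpa using hlen, ?_⟩
  simp [hprod]

end Dietzmann

namespace Module.End

variable {K V : Type*} [Field K] [AddCommGroup V] [Module K V]

lemma le_iSup_eigenspace_of_isSemisimple_restrict [IsAlgClosed K] [FiniteDimensional K V]
    {f : End K V} {U : Submodule K V} (hU : ∀ v ∈ U, f v ∈ U) (hf : IsSemisimple (f.restrict hU)) :
    U ≤ ⨆ μ, f.eigenspace μ := by
  calc U = (⊤ : Submodule K U).map U.subtype := by simp
    _ = ⨆ μ, (eigenspace (f.restrict hU) μ).map U.subtype := by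
      rw [← hf.iSup_eigenspace_eq_top, Submodule.map_iSup]
    _ ≤ ⨆ μ, f.eigenspace μ := iSup_mono fun μ ↦ f.eigenspace_restrict_le_eigenspace hU μ

lemma le_iSup_eigenspace_of_pow_eq_smul [IsAlgClosed K] [CharZero K] [FiniteDimensional K V]
    {f : End K V} {U : Submodule K V} (hU : ∀ v ∈ U, f v ∈ U) {n : ℕ} (hn : n ≠ 0) {μ : K}
    (hμ : μ ≠ 0) (hpow : ∀ v ∈ U, (f ^ n) v = μ • v) : U ≤ ⨆ ν, f.eigenspace ν := by
  refine le_iSup_eigenspace_of_isSemisimple_restrict hU <|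
    isSemisimple_of_squarefree_aeval_eq_zero
      (Polynomial.separable_X_pow_sub_C μ (Nat.cast_ne_zero.mpr hn) hμ).squarefree ?_
  ext ⟨v, hv⟩
  simp [pow_restrict n hU, LinearMap.restrict_apply, hpow v hv]

lemma iSup_iInf_eigenspace_eq_top_of_commute [IsAlgClosed K] [FiniteDimensional K V] {ι : Type*}
    (f : ι → End K V) (hcomm : ∀ i j, Commute (f i) (f j)) (hss : ∀ i, (f i).IsSemisimple) :
    ⨆ χ : ι → K, ⨅ i, (f i).eigenspace (χ i) = ⊤ := by
  simp_rw [← fun i ↦ (hss i).isFinitelySemisimple.maxGenEigenspace_eq_eigenspace]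
  exact iSup_iInf_maxGenEigenspace_eq_top_of_iSup_maxGenEigenspace_eq_top_of_commute f
    (fun i j _ ↦ hcomm i j) fun i ↦ iSup_maxGenEigenspace_eq_top (f i)

end Module.End

section Diagonalizable

variable {V : Type} [AddCommGroup V] [Module ℂ V]

lemma isDiagonalizable_iff_iSup_eigenspace_eq_top (f : Module.End ℂ V) :
    IsDiagonalizable f ↔ ⨆ μ, f.eigenspace μ = ⊤ := by
  constructor
  · rintro ⟨ι, b, hb⟩
    rw [eq_top_iff, ← b.span_eq, Submodule.span_le]
    rintro _ ⟨i, rfl⟩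
    obtain ⟨μ, hμ⟩ := hb i
    exact Submodule.mem_iSup_of_mem μ (Module.End.mem_eigenspace_iff.mpr hμ)
  · intro h
    classical
    have hint : DirectSum.IsInternal f.eigenspace :=
      (DirectSum.isInternal_submodule_iff_iSupIndep_and_iSup_eq_top _).mpr
        ⟨f.eigenspaces_iSupIndep, h⟩
    let B μ := Module.Basis.ofVectorSpace ℂ (f.eigenspace μ)
    exact ⟨_, hint.collectedBasis B, fun i ↦
      ⟨i.1, Module.End.mem_eigenspace_iff.mp (hint.collectedBasis_mem B i)⟩⟩

lemma IsDiagonalizable.isSemisimple [FiniteDimensional ℂ V] {f : Module.End ℂ V}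
    (hf : IsDiagonalizable f) : f.IsSemisimple := by
  classical
  obtain ⟨ι, b, hb⟩ := hf
  have : Finite ι := Module.Finite.finite_basis b
  have : Fintype ι := Fintype.ofFinite ι
  choose μ hμ using hb
  refine Module.End.isSemisimple_of_squarefree_aeval_eq_zero
    (p := ∏ a : Set.range μ, (Polynomial.X - Polynomial.C (a : ℂ)))
    (Polynomial.separable_prod_X_sub_C_iff.mpr Subtype.val_injective).squarefree
    (b.ext fun i ↦ ?_)
  rw [← Finset.prod_erase_mul _ _ (Finset.mem_univ ⟨μ i, i, rfl⟩), map_mul, Module.End.mul_apply]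
  simp [hμ i]

end Diagonalizable

namespace Algebra

variable {R A P : Type*} [CommSemiring R] [Semiring A] [Algebra R A] {s : Set A}
  [AddCommMonoid P] [Module R P] [Module (adjoin R s) P] [IsScalarTower R (adjoin R s) P]

lemma adjoin_smul_mem {U : Submodule R P}
    (hU : ∀ a (ha : a ∈ s), ∀ v ∈ U, (⟨a, subset_adjoin ha⟩ : adjoin R s) • v ∈ U)
    (b : adjoin R s) {v : P} (hv : v ∈ U) : b • v ∈ U := by
  obtain ⟨b, hb⟩ := b
  induction hb using adjoin_induction generalizing v with
  | mem a ha => exact hU a ha v hv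
  | algebraMap r =>
    change algebraMap R (adjoin R s) r • v ∈ U
    rw [algebraMap_smul]
    exact U.smul_mem r hv
  | add a b ha hb iha ihb =>
    change ((⟨a, ha⟩ + ⟨b, hb⟩ : adjoin R s)) • v ∈ U
    rw [add_smul]
    exact U.add_mem (iha hv) (ihb hv)
  | mul a b ha hb iha ihb =>
    change ((⟨a, ha⟩ * ⟨b, hb⟩ : adjoin R s)) • v ∈ U
    rw [mul_smul]
    exact iha (ihb hv)

end Algebra

/-- Maschke's theorem for a finite-order representation of a finite shelf: by Dietzmann's lemma
the operators generate a finite group. -/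
theorem exists_isCompl_of_pow_eq_one {Q : Type*} [Shelf Q] [Finite Q] {k P : Type*} [Field k]
    [CharZero k] [AddCommGroup P] [Module k P] (t : Q → Module.End k P)
    (hrel : ∀ x y, t (x ◃ y) * t x = t x * t y) {n : ℕ} (hn : n ≠ 0) (hpow : ∀ x, t x ^ n = 1)
    {U : Submodule k P} (hU : ∀ x, ∀ v ∈ U, t x v ∈ U) :
    ∃ U' : Submodule k P, (∀ x, ∀ v ∈ U', t x v ∈ U') ∧ IsCompl U U' := by
  let u x := Units.ofPowEqOne (t x) n (hpow x) hn
  let H := Subgroup.closure (Set.range u)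
  have : Finite H := by
    refine (Subgroup.finite_closure_of_conj_mem (Set.finite_range u) hn ?_ ?_).to_subtype
    · rintro _ ⟨x, rfl⟩
      exact Units.ext (by simp [u])
    · rintro _ ⟨x, rfl⟩ _ ⟨y, rfl⟩
      exact ⟨x ◃ y, eq_mul_inv_iff_mul_eq.mpr (Units.ext (by simp [u, hrel]))⟩
  let θ : Representation k H P := (Units.coeHom _).comp H.subtype
  have hUH : ∀ h ∈ H, ∀ v ∈ U, (h : Module.End k P) v ∈ U := by
    intro h hh
    induction hh using Subgroup.closure_induction'' with
    | mem _ hx => obtain ⟨x, rfl⟩ := hx; exact hU x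
    | inv_mem _ hx =>
      obtain ⟨x, rfl⟩ := hx
      intro v hv
      rw [Units.val_inv_ofPowEqOne, Module.End.coe_pow]
      exact Set.MapsTo.iterate (fun v hv ↦ hU x v hv) (n - 1) hv
    | one => simp
    | mul a b _ _ ha hb => exact fun v hv ↦ ha _ (hb v hv)
  let S₀ : Subrepresentation θ := ⟨U, fun h _ hv ↦ hUH h h.2 _ hv⟩
  obtain ⟨S, hS⟩ := exists_isCompl S₀
  have hu : ∀ x, u x ∈ H := fun x ↦ Subgroup.subset_closure (Set.mem_range_self x)
  refine ⟨S.toSubmodule, fun x _ hv ↦ S.apply_mem_toSubmodule ⟨u x, hu x⟩ hv,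
    ⟨disjoint_iff.mpr ?_, codisjoint_iff.mpr ?_⟩⟩
  · exact congrArg Subrepresentation.toSubmodule (disjoint_iff.mp hS.disjoint)
  · exact congrArg Subrepresentation.toSubmodule (codisjoint_iff.mp hS.codisjoint)

section RepAlgebra

variable {Q : Type} {V : Type} [AddCommGroup V] [Module ℂ V] (ρ : Q → V ≃ₗ[ℂ] V)

abbrev repAlgebra : Subalgebra ℂ (Module.End ℂ V) :=
  Algebra.adjoin ℂ (Set.range fun x ↦ (ρ x : Module.End ℂ V))

def repAlgebra.gen (x : Q) : repAlgebra ρ := ⟨ρ x, Algebra.subset_adjoin ⟨x, rfl⟩⟩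

@[simp]
lemma repAlgebra.coe_gen (x : Q) : (repAlgebra.gen ρ x : Module.End ℂ V) = ρ x := rfl

variable [Quandle Q]

lemma isSubrep_iff_exists_restrictScalars_eq (U : Submodule ℂ V) :
    IsSubrep ρ U ↔ ∃ N : Submodule (repAlgebra ρ) V, N.restrictScalars ℂ = U := by
  refine ⟨fun hU ↦ ⟨{ U with smul_mem' := fun b _ hv ↦ Algebra.adjoin_smul_mem ?_ b hv }, rfl⟩, ?_⟩
  · rintro _ ⟨x, rfl⟩ v hv
    exact hU x v hv
  · rintro ⟨N, rfl⟩ x v hv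
    exact N.smul_mem (repAlgebra.gen ρ x) hv

lemma isSubrep_restrictScalars (N : Submodule (repAlgebra ρ) V) :
    IsSubrep ρ (N.restrictScalars ℂ) :=
  (isSubrep_iff_exists_restrictScalars_eq ρ _).mpr ⟨N, rfl⟩

lemma isAtom_iff_irreducible (N : Submodule (repAlgebra ρ) V) :
    IsAtom N ↔ N ≠ ⊥ ∧ ∀ U ≤ N.restrictScalars ℂ, IsSubrep ρ U →
      U = ⊥ ∨ U = N.restrictScalars ℂ := by
  refine ⟨fun ⟨hne, hmin⟩ ↦ ⟨hne, fun U hUN hU ↦ ?_⟩, fun ⟨hne, hirr⟩ ↦ ⟨hne, fun N' hlt ↦ ?_⟩⟩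
  · obtain ⟨N', rfl⟩ := (isSubrep_iff_exists_restrictScalars_eq ρ U).mp hU
    rcases (Submodule.restrictScalars_le ..).mp hUN |>.lt_or_eq with hlt | heq
    · exact Or.inl (by rw [hmin N' hlt, Submodule.restrictScalars_bot])
    · exact Or.inr (heq ▸ rfl)
  · rcases hirr _ (Submodule.restrictScalars_mono ℂ hlt.le) (isSubrep_restrictScalars ρ N') with
      h | h
    · exact (Submodule.restrictScalars_eq_bot_iff ..).mp h
    · exact absurd (Submodule.restrictScalars_injective ℂ _ _ h) hlt.ne

theorem completelyReducibleQuandleRep_iff_isSemisimpleModule :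
    CompletelyReducibleQuandleRep ρ ↔ IsSemisimpleModule (repAlgebra ρ) V := by
  constructor
  · rintro ⟨ι, W, -, hsup, hW⟩
    choose N hN using fun i ↦ (isSubrep_iff_exists_restrictScalars_eq ρ (W i)).mp (hW i).1
    have htop : ⨆ i, N i = ⊤ := Submodule.restrictScalars_injective ℂ _ _ <| by
      simp only [Submodule.restrictScalars_iSup, hN, hsup, Submodule.restrictScalars_top]
    refine IsSemisimpleModule.of_sSup_simples_eq_top (eq_top_iff.mpr (htop ▸ iSup_le fun i ↦ ?_))
    rcases eq_or_ne (N i) ⊥ with h | h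
    · exact h ▸ bot_le
    · exact le_sSup (isSimpleModule_iff_isAtom.mpr
        ((isAtom_iff_irreducible ρ _).mpr ⟨h, hN i ▸ (hW i).2⟩))
  · intro _
    obtain ⟨s, hind, hsup, hsimple⟩ :=
      IsSemisimpleModule.exists_sSupIndep_sSup_simples_eq_top (repAlgebra ρ) V
    refine ⟨s, fun N ↦ (N : Submodule (repAlgebra ρ) V).restrictScalars ℂ, fun N ↦ ?_, ?_, fun N ↦
      ⟨isSubrep_restrictScalars ρ N, ((isAtom_iff_irreducible ρ N).mp
        (isSimpleModule_iff_isAtom.mp (hsimple N N.2))).2⟩⟩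
    · simpa only [← Submodule.restrictScalars_iSup, Submodule.disjoint_restrictScalars_iff] using
        (sSupIndep_iff s).mp hind N
    · rw [← Submodule.restrictScalars_iSup, ← sSup_eq_iSup', hsup, Submodule.restrictScalars_top]

end RepAlgebra

section QuandleRep

variable {Q : Type} [Quandle Q] {V : Type} [AddCommGroup V] [Module ℂ V] {ρ : Q → V ≃ₗ[ℂ] V}

namespace IsQuandleRep

lemma mul_eq (hrep : IsQuandleRep ρ) (x y : Q) : ρ x * ρ y = ρ (x ◃ y) * ρ x := by
  rw [hrep, inv_mul_cancel_right]

lemma pow_mul_act (hrep : IsQuandleRep ρ) (x y : Q) (k : ℕ) :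
    ρ x ^ k * ρ y = ρ ((Rack.act' x ^ k) y) * ρ x ^ k := by
  induction k with
  | zero => simp
  | succ k ih =>
    rw [pow_succ', mul_assoc, ih, ← mul_assoc, hrep.mul_eq, mul_assoc, ← pow_succ',
      pow_succ' (Rack.act' x), Equiv.Perm.mul_apply, Rack.act'_apply]

lemma commute_pow_card [Finite Q] (hrep : IsQuandleRep ρ) (x y : Q) :
    Commute ((ρ x : Module.End ℂ V) ^ Nat.card (Equiv.Perm Q)) (ρ y) := by
  have h : Commute (ρ x ^ Nat.card (Equiv.Perm Q)) (ρ y) := by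
    simpa [Commute, SemiconjBy, pow_card_eq_one'] using
      hrep.pow_mul_act x y (Nat.card (Equiv.Perm Q))
  have h' := h.map LinearEquiv.automorphismGroup.toLinearMapMonoidHom
  rw [map_pow] at h'
  exact h'

lemma pow_mul_eq_mul_pow (hrep : IsQuandleRep ρ) (x y : Q) (k : ℕ) :
    (ρ (x ◃ y) : Module.End ℂ V) ^ k * ρ x = ρ x * (ρ y : Module.End ℂ V) ^ k := by
  have h : ρ (x ◃ y) ^ k * ρ x = ρ x * ρ y ^ k := by
    rw [hrep, conj_pow, inv_mul_cancel_right]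
  have h' := congrArg LinearEquiv.automorphismGroup.toLinearMapMonoidHom h
  rw [map_mul, map_mul, map_pow, map_pow] at h'
  exact h'

end IsQuandleRep

/-- Schur's lemma. -/
lemma exists_forall_apply_eq_smul_of_isAtom [FiniteDimensional ℂ V]
    {N : Submodule (repAlgebra ρ) V} (hN : IsAtom N) {g : Module.End ℂ V}
    (hgN : ∀ v ∈ N, g v ∈ N) (hg : ∀ y, Commute g (ρ y)) :
    ∃ μ : ℂ, ∀ v ∈ N, g v = μ • v := by
  obtain ⟨hne, hirr⟩ := (isAtom_iff_irreducible ρ N).mp hN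
  have : Nontrivial (N.restrictScalars ℂ) := Submodule.nontrivial_iff_ne_bot.mpr
    (by rwa [Ne, Submodule.restrictScalars_eq_bot_iff])
  obtain ⟨μ, hμ⟩ := Module.End.exists_eigenvalue (g.restrict (p := N.restrictScalars ℂ) hgN)
  obtain ⟨w, hw⟩ := hμ.exists_hasEigenvector
  have hsub : IsSubrep ρ (N.restrictScalars ℂ ⊓ g.eigenspace μ) := by
    intro y v hv
    obtain ⟨hvN, hvμ⟩ := Submodule.mem_inf.mp hv
    refine Submodule.mem_inf.mpr ⟨N.smul_mem (repAlgebra.gen ρ y) hvN, ?_⟩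
    rw [Module.End.mem_eigenspace_iff] at hvμ ⊢
    calc g (ρ y v) = ρ y (g v) := LinearMap.congr_fun (hg y).eq v
      _ = μ • ρ y v := by rw [hvμ, map_smul]
  have hne' : N.restrictScalars ℂ ⊓ g.eigenspace μ ≠ ⊥ := by
    refine (Submodule.ne_bot_iff _).mpr ⟨w, Submodule.mem_inf.mpr ⟨w.2, ?_⟩, ?_⟩
    · exact Module.End.mem_eigenspace_iff.mpr (congrArg Subtype.val hw.apply_eq_smul)
    · exact fun h ↦ hw.2 (Subtype.ext h)
  have heq := (hirr _ inf_le_left hsub).resolve_left hne'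
  refine ⟨μ, fun v hv ↦ Module.End.mem_eigenspace_iff.mp ?_⟩
  exact (Submodule.mem_inf.mp (heq.symm ▸ hv : v ∈ N.restrictScalars ℂ ⊓ g.eigenspace μ)).2

lemma isSubrep_iInf_eigenspace {n : ℕ}
    (hcomm : ∀ x y, Commute ((ρ x : Module.End ℂ V) ^ n) (ρ y)) (χ : Q → ℂ) :
    IsSubrep ρ (⨅ x, Module.End.eigenspace ((ρ x : Module.End ℂ V) ^ n) (χ x)) := by
  intro y v hv
  simp only [Submodule.mem_iInf, Module.End.mem_eigenspace_iff] at hv ⊢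
  intro x
  calc ((ρ x : Module.End ℂ V) ^ n) (ρ y v) = ρ y (((ρ x : Module.End ℂ V) ^ n) v) :=
        LinearMap.congr_fun (hcomm x y).eq v
    _ = χ x • ρ y v := by rw [hv x, map_smul]

lemma IsQuandleRep.apply_act_eq_of_mem_iInf_eigenspace (hrep : IsQuandleRep ρ) {n : ℕ}
    (hcomm : ∀ x y, Commute ((ρ x : Module.End ℂ V) ^ n) (ρ y)) {χ : Q → ℂ} {v : V} (hv0 : v ≠ 0)
    (hv : v ∈ ⨅ x, Module.End.eigenspace ((ρ x : Module.End ℂ V) ^ n) (χ x)) (x y : Q) :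
    χ (x ◃ y) = χ y := by
  have hxv := isSubrep_iInf_eigenspace hcomm χ x v hv
  simp only [Submodule.mem_iInf, Module.End.mem_eigenspace_iff] at hv hxv
  refine smul_left_injective ℂ ((ρ x).map_ne_zero_iff.mpr hv0) ?_
  calc χ (x ◃ y) • ρ x v = ((ρ (x ◃ y) : Module.End ℂ V) ^ n) (ρ x v) := (hxv _).symm
    _ = ρ x (((ρ y : Module.End ℂ V) ^ n) v) :=
        LinearMap.congr_fun (hrep.pow_mul_eq_mul_pow x y n) v
    _ = χ y • ρ x v := by rw [hv y, map_smul]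

theorem isSemisimpleModule_of_pow_apply_eq_smul [Finite Q] (hrep : IsQuandleRep ρ)
    (N : Submodule (repAlgebra ρ) V) {n : ℕ} (hn : n ≠ 0) {c : Q → ℂ} (hc0 : ∀ x, c x ≠ 0)
    (hc : ∀ x y, c (x ◃ y) = c y)
    (hpow : ∀ x, ∀ v ∈ N, ((ρ x : Module.End ℂ V) ^ n) v = c x ^ n • v) :
    IsSemisimpleModule (repAlgebra ρ) N := by
  let r := Algebra.lsmul ℂ ℂ N (A := repAlgebra ρ)
  -- rescaled by `c`, the operators `ρ x` on `N` satisfy the shelf relation and have order `∣ n`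
  let t x : Module.End ℂ N := (c x)⁻¹ • r (repAlgebra.gen ρ x)
  have ht : ∀ x (v : N), t x v = (c x)⁻¹ • (repAlgebra.gen ρ x • v) := fun _ _ ↦ rfl
  have hrel : ∀ x y, t (x ◃ y) * t x = t x * t y := by
    intro x y
    have hgen : repAlgebra.gen ρ (x ◃ y) * repAlgebra.gen ρ x =
        repAlgebra.gen ρ x * repAlgebra.gen ρ y :=
      Subtype.ext <| by simpa using hrep.pow_mul_eq_mul_pow x y 1
    simp only [t, smul_mul_smul_comm, ← map_mul, hgen, hc, mul_comm]
  have htpow : ∀ x, t x ^ n = 1 := by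
    intro x
    ext v
    simp only [t, smul_pow, ← map_pow, LinearMap.smul_apply, Module.End.one_apply]
    change (c x)⁻¹ ^ n • (((repAlgebra.gen ρ x ^ n : repAlgebra ρ) : Module.End ℂ V) v) = v
    rw [SubmonoidClass.coe_pow, repAlgebra.coe_gen, hpow x v v.2, smul_smul, inv_pow,
      inv_mul_cancel₀ (pow_ne_zero n (hc0 x)), one_smul]
  rw [isSemisimpleModule_iff]
  refine ⟨fun N' ↦ ?_⟩
  have hN' : ∀ x, ∀ v ∈ N'.restrictScalars ℂ, t x v ∈ N'.restrictScalars ℂ := fun x v hv ↦ by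
    rw [ht]
    exact Submodule.smul_of_tower_mem _ _ (N'.smul_mem _ hv)
  obtain ⟨U', hU', hcompl⟩ := exists_isCompl_of_pow_eq_one (k := ℂ) (P := N) t hrel hn htpow hN'
  refine ⟨{ U' with smul_mem' := fun b _ hv ↦ Algebra.adjoin_smul_mem ?_ b hv },
    (Submodule.isCompl_restrictScalars_iff ℂ).mp hcompl⟩
  rintro _ ⟨x, rfl⟩ v hv
  have : repAlgebra.gen ρ x • v = c x • t x v := by
    rw [ht, smul_smul, mul_inv_cancel₀ (hc0 x), one_smul]
  exact this ▸ U'.smul_mem _ (hU' x v hv)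

end QuandleRep

section Main

variable {Q : Type} [Quandle Q] [Finite Q] {V : Type} [AddCommGroup V] [Module ℂ V]
  [FiniteDimensional ℂ V] {ρ : Q → V ≃ₗ[ℂ] V}

theorem isDiagonalizable_of_isSemisimpleModule (hrep : IsQuandleRep ρ)
    [IsSemisimpleModule (repAlgebra ρ) V] (x : Q) : IsDiagonalizable (ρ x : Module.End ℂ V) := by
  rw [isDiagonalizable_iff_iSup_eigenspace_eq_top, eq_top_iff,
    ← Submodule.restrictScalars_top ℂ (repAlgebra ρ) V,
    ← IsSemisimpleModule.sSup_simples_eq_top, Submodule.restrictScalars_sSup]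
  refine sSup_le ?_
  rintro _ ⟨N, hN, rfl⟩
  have hN : IsAtom N := isSimpleModule_iff_isAtom.mp hN
  set n := Nat.card (Equiv.Perm Q)
  obtain ⟨μ, hμ⟩ := exists_forall_apply_eq_smul_of_isAtom hN (g := (ρ x : Module.End ℂ V) ^ n)
    (fun v hv ↦ N.smul_mem (repAlgebra.gen ρ x ^ n) hv) (hrep.commute_pow_card x)
  have hμ0 : μ ≠ 0 := by
    rintro rfl
    obtain ⟨v, hv, hv0⟩ := Submodule.exists_mem_ne_zero_of_ne_bot hN.1
    refine hv0 ((ρ x ^ n).injective ?_)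
    simpa [LinearEquiv.coe_pow, Module.End.coe_pow] using hμ v hv
  exact Module.End.le_iSup_eigenspace_of_pow_eq_smul
    (fun v hv ↦ N.smul_mem (repAlgebra.gen ρ x) hv) Nat.card_pos.ne' hμ0 hμ

theorem isSemisimpleModule_of_isDiagonalizable (hrep : IsQuandleRep ρ)
    (hdiag : ∀ x, IsDiagonalizable (ρ x : Module.End ℂ V)) :
    IsSemisimpleModule (repAlgebra ρ) V := by
  set n := Nat.card (Equiv.Perm Q)
  have hn : n ≠ 0 := Nat.card_pos.ne'
  have hcomm := hrep.commute_pow_card (ρ := ρ)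
  let W (χ : Q → ℂ) := ⨅ x, Module.End.eigenspace ((ρ x : Module.End ℂ V) ^ n) (χ x)
  choose N hN using fun χ ↦
    (isSubrep_iff_exists_restrictScalars_eq ρ (W χ)).mp (isSubrep_iInf_eigenspace hcomm χ)
  have htop : ⨆ χ, N χ = ⊤ := Submodule.restrictScalars_injective ℂ _ _ <| by
    simp only [Submodule.restrictScalars_iSup, hN, Submodule.restrictScalars_top]
    exact Module.End.iSup_iInf_eigenspace_eq_top_of_commute _
      (fun x y ↦ (hcomm x y).pow_right n) fun x ↦ (hdiag x).isSemisimple.pow n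
  refine isSemisimpleModule_of_isSemisimpleModule_submodule' (p := fun χ : {χ // N χ ≠ ⊥} ↦ N χ)
    (fun ⟨χ, hχ⟩ ↦ ?_) ((iSup_ne_bot_subtype N).trans htop)
  have hW : ∀ x, ∀ v ∈ N χ, ((ρ x : Module.End ℂ V) ^ n) v = χ x • v := fun x v hv ↦
    Module.End.mem_eigenspace_iff.mp (Submodule.mem_iInf _ |>.mp (hN χ ▸ hv : v ∈ W χ) x)
  obtain ⟨v, hv, hv0⟩ := Submodule.exists_mem_ne_zero_of_ne_bot hχ
  have hχ0 : ∀ x, χ x ≠ 0 := fun x h ↦ hv0 <| (ρ x ^ n).injective <| by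
    simpa [h, LinearEquiv.coe_pow, Module.End.coe_pow] using hW x v hv
  choose root hroot using fun z : ℂ ↦ IsAlgClosed.exists_pow_nat_eq z (Nat.pos_of_ne_zero hn)
  refine isSemisimpleModule_of_pow_apply_eq_smul hrep (N χ) hn (c := fun x ↦ root (χ x))
    (fun x h ↦ hχ0 x ?_) (fun x y ↦ ?_) fun x w hw ↦ by rw [hroot]; exact hW x w hw
  · rw [← hroot (χ x), h, zero_pow hn]
  · rw [hrep.apply_act_eq_of_mem_iInf_eigenspace hcomm hv0 (hN χ ▸ hv : v ∈ W χ) x y]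

end Main

/-- A finite-dimensional complex representation `ρ` of a finite quandle `Q` is
completely reducible if and only if `ρ(x)` is diagonalizable for every `x ∈ Q`. -/
theorem quandle_rep_completelyReducible_iff_diagonalizable
    {Q : Type} [Quandle Q] [Finite Q] {V : Type} [AddCommGroup V] [Module ℂ V]
    [FiniteDimensional ℂ V] (ρ : Q → V ≃ₗ[ℂ] V) (hrep : IsQuandleRep ρ) :
    CompletelyReducibleQuandleRep ρ ↔ ∀ x : Q, IsDiagonalizable (ρ x : V →ₗ[ℂ] V) := by
  rw [completelyReducibleQuandleRep_iff_isSemisimpleModule]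
  exact ⟨fun _ ↦ isDiagonalizable_of_isSemisimpleModule hrep,
    isSemisimpleModule_of_isDiagonalizable hrep⟩
end

section
/- Let Q be a finite quandle and ρ : Q → GL(V) an irreducible quandle representation on a finite-dimensional complex vector space V. Then ρ(x) is diagonalizable for every x ∈ Q. -/
open Quandles

/-! Since `Q` is finite, the left translation `x ◃ ·` has a finite order `n`, and the
representation identity gives `ρ((x ◃ ·)ⁿ y) = ρ(x)ⁿ ρ(y) ρ(x)⁻ⁿ`, so `ρ(x)ⁿ` commutes with the
whole image of `ρ`. By Schur's lemma irreducibility forces `ρ(x)ⁿ = μ` for a scalar `μ ≠ 0`;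
hence `ρ(x)` is annihilated by the separable polynomial `Xⁿ - μ`, so it is semisimple, i.e.
diagonalizable over `ℂ`. -/

section Diagonalizable

variable {V : Type} [AddCommGroup V] [Module ℂ V]

lemma isDiagonalizable_of_iSup_eigenspace_eq_top {f : Module.End ℂ V}
    (h : ⨆ μ : ℂ, f.eigenspace μ = ⊤) : IsDiagonalizable f := by
  have hint : DirectSum.IsInternal fun μ : ℂ => f.eigenspace μ :=
    (DirectSum.isInternal_submodule_iff_iSupIndep_and_iSup_eq_top _).mpr
      ⟨Module.End.eigenspaces_iSupIndep f, h⟩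
  let b (μ : ℂ) := Module.Free.chooseBasis ℂ (f.eigenspace μ)
  exact ⟨_, hint.collectedBasis b, fun i =>
    ⟨i.1, Module.End.mem_eigenspace_iff.mp (hint.collectedBasis_mem b i)⟩⟩

lemma isDiagonalizable_of_pow_eq_smul_one [FiniteDimensional ℂ V] {f : Module.End ℂ V}
    {n : ℕ} (hn : 0 < n) {μ : ℂ} (hμ : μ ≠ 0) (h : f ^ n = μ • 1) : IsDiagonalizable f := by
  have hsep : (Polynomial.X ^ n - Polynomial.C μ).Separable :=
    Polynomial.separable_X_pow_sub_C μ (Nat.cast_ne_zero.mpr hn.ne') hμ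
  have hann : Polynomial.aeval f (Polynomial.X ^ n - Polynomial.C μ) = 0 := by
    simp [h, Algebra.algebraMap_eq_smul_one]
  have hss : f.IsSemisimple :=
    Module.End.isSemisimple_of_squarefree_aeval_eq_zero hsep.squarefree hann
  exact isDiagonalizable_of_iSup_eigenspace_eq_top hss.iSup_eigenspace_eq_top

end Diagonalizable

section QuandleRep

variable {Q : Type} [Quandle Q] {V : Type} [AddCommGroup V] [Module ℂ V]
  {ρ : Q → V ≃ₗ[ℂ] V}

lemma IsQuandleRep.apply_act'_pow (hρ : IsQuandleRep ρ) (x y : Q) (k : ℕ) :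
    ρ ((Rack.act' x ^ k) y) = ρ x ^ k * ρ y * (ρ x ^ k)⁻¹ := by
  induction k with
  | zero => simp
  | succ k ih =>
    rw [pow_succ', Equiv.Perm.mul_apply, Rack.act'_apply, hρ, ih, pow_succ', mul_inv_rev]
    group

lemma IsQuandleRep.commute_pow_orderOf (hρ : IsQuandleRep ρ) (x y : Q) :
    Commute (ρ x ^ orderOf (Rack.act' x)) (ρ y) := by
  have h := hρ.apply_act'_pow x y (orderOf (Rack.act' x))
  rw [pow_orderOf_eq_one, Equiv.Perm.one_apply, eq_mul_inv_iff_mul_eq] at h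
  exact h.symm

lemma isSubrep_eigenspace_of_commute {g : Module.End ℂ V}
    (hg : ∀ y, Commute g (ρ y : Module.End ℂ V)) (μ : ℂ) : IsSubrep ρ (g.eigenspace μ) := by
  intro y v hv
  rw [Module.End.mem_eigenspace_iff] at hv ⊢
  rw [← LinearEquiv.coe_coe, ← Module.End.mul_apply, hg y, Module.End.mul_apply, hv, map_smul]

lemma exists_ne_zero_eq_smul_one_of_commute [FiniteDimensional ℂ V]
    (hirr : ∀ W : Submodule ℂ V, IsSubrep ρ W → W = ⊥ ∨ W = ⊤) {g : V ≃ₗ[ℂ] V}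
    (hg : ∀ y, Commute g (ρ y)) : ∃ μ : ℂ, μ ≠ 0 ∧ (g : Module.End ℂ V) = μ • 1 := by
  rcases subsingleton_or_nontrivial V with hV | hV
  · exact ⟨1, one_ne_zero, Subsingleton.elim _ _⟩
  obtain ⟨μ, hμ⟩ := Module.End.exists_eigenvalue (g : Module.End ℂ V)
  have hsub := isSubrep_eigenspace_of_commute
    (fun y => (hg y).map LinearEquiv.automorphismGroup.toLinearMapMonoidHom) μ
  have htop : Module.End.eigenspace (g : Module.End ℂ V) μ = ⊤ := (hirr _ hsub).resolve_left hμ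
  have hgμ : (g : Module.End ℂ V) = μ • 1 := by
    rwa [Module.End.eigenspace_def, LinearMap.ker_eq_top, sub_eq_zero] at htop
  refine ⟨μ, fun hμ0 => ?_, hgμ⟩
  obtain ⟨v, hv⟩ := exists_ne (0 : V)
  exact hv (g.injective (by simpa [hμ0] using LinearMap.congr_fun hgμ v))

end QuandleRep

/-- For an irreducible finite-dimensional complex representation `ρ` of a finite
quandle `Q`, every `ρ(x)` is diagonalizable. -/
theorem irreducible_quandle_rep_diagonalizable
    {Q : Type} [Quandle Q] [Finite Q] {V : Type} [AddCommGroup V] [Module ℂ V]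
    [FiniteDimensional ℂ V] (ρ : Q → V ≃ₗ[ℂ] V) (hrep : IsQuandleRep ρ)
    (hirr : ∀ W : Submodule ℂ V, IsSubrep ρ W → W = ⊥ ∨ W = ⊤) :
    ∀ x : Q, IsDiagonalizable (ρ x : V →ₗ[ℂ] V) := by
  intro x
  obtain ⟨μ, hμ, hpow⟩ :=
    exists_ne_zero_eq_smul_one_of_commute hirr (hrep.commute_pow_orderOf x)
  refine isDiagonalizable_of_pow_eq_smul_one (orderOf_pos (Rack.act' x)) hμ ?_
  rw [← hpow]
  exact (map_pow LinearEquiv.automorphismGroup.toLinearMapMonoidHom _ _).symm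
end

section
/- Let Q be a finite quandle and ρ : Q → GL(V) an irreducible quandle representation on a nonzero finite-dimensional complex vector space V. Then there exists a quandle character χ : Q → ℂ^× such that the map x ↦ χ(x)·ρ(x) is an irreducible quandle representation of Q on V and there exists an inner product on V for which every χ(x)ρ(x), x ∈ Q, is an isometry. -/
/-!
Twisting `ρ` by an `n`-th root `χ x` of `det (ρ x)⁻¹`, `n = dim V`, gives a quandle character,
since `det ρ` is constant along `y ↦ x ◃ y`, and a representation `σ` of determinant one with the
same subrepresentations. The group `H` generated by the `σ x` permutes the finite set `{σ x}` by
conjugation, and the kernel of this action consists of operators commuting with the irreducible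
`σ`: by Schur's lemma these are scalars of determinant one, i.e. `n`-th roots of unity. So `H` is
finite, and averaging an inner product over `H` makes every `σ x` an isometry.
-/

open Quandles

/-- The quandle representation `ρ` is irreducible. -/
def IsIrreducibleQuandleRep {Q : Type} [Quandle Q] {V : Type} [AddCommGroup V] [Module ℂ V]
    (ρ : Q → V ≃ₗ[ℂ] V) : Prop :=
  ∀ W : Submodule ℂ V, IsSubrep ρ W → W = ⊥ ∨ W = ⊤

open Subgroup Set Module

theorem LinearEquiv.det_smulOfUnit {R M : Type*} [CommRing R] [AddCommGroup M] [Module R M]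
    [Module.Free R M] (u : Rˣ) :
    LinearEquiv.det (LinearEquiv.smulOfUnit u : M ≃ₗ[R] M) = u ^ finrank R M := by
  ext
  have : ((LinearEquiv.smulOfUnit u : M ≃ₗ[R] M) : M →ₗ[R] M) = (u : R) • LinearMap.id := rfl
  rw [LinearEquiv.coe_det, this, LinearMap.det_smul, LinearMap.det_id, mul_one,
    Units.val_pow_eq_pow_val]

theorem LinearEquiv.smulOfUnit_mul_comm {R M : Type*} [CommSemiring R] [AddCommMonoid M]
    [Module R M] (u : Rˣ) (f : M ≃ₗ[R] M) : smulOfUnit u * f = f * smulOfUnit u :=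
  LinearEquiv.ext fun v => (f.map_smul_of_tower u v).symm

theorem IsAlgClosed.exists_units_pow_eq {K : Type*} [Field K] [IsAlgClosed K] (u : Kˣ) {n : ℕ}
    (hn : n ≠ 0) : ∃ z : Kˣ, z ^ n = u := by
  obtain ⟨z, hz⟩ := IsAlgClosed.exists_pow_nat_eq (u : K) (Nat.pos_of_ne_zero hn)
  have hz0 : z ≠ 0 := by rintro rfl; exact u.ne_zero (hz ▸ zero_pow hn)
  exact ⟨Units.mk0 z hz0, Units.ext hz⟩

theorem Subgroup.finite_of_conj_mem_of_finite_inf_centralizer {G : Type*} [Group G] {S : Set G}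
    (hS : S.Finite) {H : Subgroup G} (hconj : ∀ g ∈ H, ∀ s ∈ S, g * s * g⁻¹ ∈ S)
    (hcent : ((H ⊓ centralizer S : Subgroup G) : Set G).Finite) : (H : Set G).Finite := by
  -- Elements of `H` inducing the same permutation of `S` differ by an element of the centralizer.
  have := hS.to_subtype
  refine Finite.of_finite_fibers (fun (g : G) (s : S) => g * s * g⁻¹) ?_ ?_
  · refine (Finite.pi (t := fun _ : S => S) fun _ => hS).subset ?_
    rintro _ ⟨g, hg, rfl⟩ s -
    exact hconj g hg s s.2
  · rintro _ ⟨g₀, hg₀, rfl⟩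
    refine (hcent.image (g₀ * ·)).subset ?_
    rintro g ⟨hg, hfib⟩
    refine ⟨g₀⁻¹ * g, ⟨H.mul_mem (H.inv_mem hg₀) hg, mem_centralizer_iff.mpr fun s hs => ?_⟩,
      mul_inv_cancel_left g₀ g⟩
    have hgs : g * s * g⁻¹ = g₀ * s * g₀⁻¹ := congrFun hfib ⟨s, hs⟩
    calc s * (g₀⁻¹ * g) = g₀⁻¹ * (g₀ * s * g₀⁻¹) * g := by group
      _ = g₀⁻¹ * g * s := by rw [← hgs]; group

section QuandleRep

variable {Q : Type} {V : Type} [AddCommGroup V] [Module ℂ V] {ρ : Q → V ≃ₗ[ℂ] V}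

def twistByChar (χ : Q → ℂˣ) (ρ : Q → V ≃ₗ[ℂ] V) (x : Q) : V ≃ₗ[ℂ] V :=
  LinearEquiv.smulOfUnit (χ x) * ρ x

theorem det_twistByChar (χ : Q → ℂˣ) (x : Q) :
    LinearEquiv.det (twistByChar χ ρ x) = χ x ^ finrank ℂ V * LinearEquiv.det (ρ x) := by
  rw [twistByChar, map_mul, LinearEquiv.det_smulOfUnit]

variable [Quandle Q]

namespace IsQuandleRep

theorem det_act (hρ : IsQuandleRep ρ) (x y : Q) :
    LinearEquiv.det (ρ (x ◃ y)) = LinearEquiv.det (ρ y) := by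
  rw [hρ x y, map_mul, map_mul, map_inv, mul_inv_cancel_comm]

theorem conj_mem_range (hρ : IsQuandleRep ρ) {g : V ≃ₗ[ℂ] V} (hg : g ∈ closure (range ρ))
    {s : V ≃ₗ[ℂ] V} (hs : s ∈ range ρ) : g * s * g⁻¹ ∈ range ρ := by
  induction hg using closure_induction'' generalizing s with
  | mem _ hx =>
    obtain ⟨⟨x, rfl⟩, ⟨y, rfl⟩⟩ := And.intro hx hs
    exact ⟨x ◃ y, hρ x y⟩
  | inv_mem _ hx =>
    obtain ⟨⟨x, rfl⟩, ⟨y, rfl⟩⟩ := And.intro hx hs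
    refine ⟨x ◃⁻¹ y, ?_⟩
    have hy := hρ x (x ◃⁻¹ y)
    rw [Rack.act_invAct_eq] at hy
    rw [hy]
    group
  | one => simpa using hs
  | mul g h _ _ hg hh =>
    simpa only [mul_inv_rev, mul_assoc] using hg (hh hs)

theorem twistByChar {χ : Q → ℂˣ} (hρ : IsQuandleRep ρ) (hχ : ∀ x y, χ (x ◃ y) = χ y) :
    IsQuandleRep (twistByChar χ ρ) := by
  intro x y
  simp only [_root_.twistByChar, hχ]
  set a : V ≃ₗ[ℂ] V := LinearEquiv.smulOfUnit (χ x)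
  set b : V ≃ₗ[ℂ] V := LinearEquiv.smulOfUnit (χ y)
  have ha (f : V ≃ₗ[ℂ] V) : a * f = f * a := LinearEquiv.smulOfUnit_mul_comm _ f
  have hb (f : V ≃ₗ[ℂ] V) : b * f = f * b := LinearEquiv.smulOfUnit_mul_comm _ f
  calc b * ρ (x ◃ y) = a * (b * (ρ x * ρ y * (ρ x)⁻¹)) * a⁻¹ := by
        rw [hρ x y, ha, mul_inv_cancel_right]
    _ = a * ρ x * (b * ρ y) * (a * ρ x)⁻¹ := by
        rw [mul_assoc a (ρ x) (b * ρ y), ← mul_assoc (ρ x) b, ← hb]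
        group

end IsQuandleRep

theorem isSubrep_twistByChar_iff (χ : Q → ℂˣ) (W : Submodule ℂ V) :
    IsSubrep (twistByChar χ ρ) W ↔ IsSubrep ρ W :=
  forall_congr' fun x => forall₂_congr fun _ _ => W.smul_mem_iff' (χ x)

theorem IsIrreducibleQuandleRep.twistByChar (hρ : IsIrreducibleQuandleRep ρ) (χ : Q → ℂˣ) :
    IsIrreducibleQuandleRep (twistByChar χ ρ) :=
  fun W hW => hρ W ((isSubrep_twistByChar_iff χ W).mp hW)

section FiniteDimensional

variable [FiniteDimensional ℂ V] [Nontrivial V]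

theorem IsIrreducibleQuandleRep.exists_eq_smulOfUnit_of_commute (hρ : IsIrreducibleQuandleRep ρ)
    {k : V ≃ₗ[ℂ] V} (hk : ∀ x, Commute k (ρ x)) : ∃ u : ℂˣ, k = LinearEquiv.smulOfUnit u := by
  obtain ⟨μ, hμ⟩ := Module.End.exists_eigenvalue (k : Module.End ℂ V)
  have hsub : IsSubrep ρ (Module.End.eigenspace (k : Module.End ℂ V) μ) := by
    intro x v hv
    rw [Module.End.mem_eigenspace_iff] at hv ⊢
    calc k (ρ x v) = ρ x (k v) := LinearEquiv.congr_fun (hk x).eq v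
      _ = μ • ρ x v := by rw [LinearEquiv.coe_coe] at hv; rw [hv, map_smul]
  have hkμ (v : V) : k v = μ • v :=
    Module.End.mem_eigenspace_iff.mp ((hρ _ hsub).resolve_left hμ ▸ Submodule.mem_top)
  have hμ0 : μ ≠ 0 := by
    rintro rfl
    obtain ⟨v, hv⟩ := exists_ne (0 : V)
    exact hv (k.injective (by rw [hkμ, zero_smul, map_zero]))
  exact ⟨Units.mk0 μ hμ0, LinearEquiv.ext hkμ⟩

theorem IsIrreducibleQuandleRep.closure_inf_centralizer_subset (hρ : IsIrreducibleQuandleRep ρ)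
    (hdet : ∀ x, LinearEquiv.det (ρ x) = 1) :
    ((closure (range ρ) ⊓ centralizer (range ρ) : Subgroup (V ≃ₗ[ℂ] V)) : Set (V ≃ₗ[ℂ] V)) ⊆
      range fun ζ : rootsOfUnity (finrank ℂ V) ℂ => LinearEquiv.smulOfUnit (ζ : ℂˣ) := by
  rintro k ⟨hk, hcent⟩
  obtain ⟨u, rfl⟩ := hρ.exists_eq_smulOfUnit_of_commute fun x =>
    (Subgroup.mem_centralizer_iff.mp hcent _ ⟨x, rfl⟩).symm
  have hdet_closure : closure (range ρ) ≤ (LinearEquiv.det : (V ≃ₗ[ℂ] V) →* ℂˣ).ker :=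
    (closure_le _).mpr (range_subset_iff.mpr hdet)
  refine ⟨⟨u, (mem_rootsOfUnity _ _).mpr ?_⟩, rfl⟩
  rw [← LinearEquiv.det_smulOfUnit]
  exact hdet_closure hk

theorem IsQuandleRep.finite_closure_range [Finite Q] (hρ : IsQuandleRep ρ)
    (hirr : IsIrreducibleQuandleRep ρ) (hdet : ∀ x, LinearEquiv.det (ρ x) = 1) :
    (closure (range ρ) : Set (V ≃ₗ[ℂ] V)).Finite :=
  have : NeZero (finrank ℂ V) := ⟨finrank_pos.ne'⟩
  Subgroup.finite_of_conj_mem_of_finite_inf_centralizer (finite_range ρ)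
    (fun _ hg _ hs => hρ.conj_mem_range hg hs)
    ((finite_range _).subset (hirr.closure_inf_centralizer_subset hdet))

end FiniteDimensional

end QuandleRep

section InvariantInnerProduct

variable {𝕜 V E : Type*} [RCLike 𝕜] [AddCommGroup V] [Module 𝕜 V] [NormedAddCommGroup E]
  [InnerProductSpace 𝕜 E]

abbrev InnerProductSpace.Core.comap (f : V →ₗ[𝕜] E) (hf : Function.Injective f) :
    InnerProductSpace.Core 𝕜 V where
  inner v w := inner 𝕜 (f v) (f w)
  conj_inner_symm v w := _root_.inner_conj_symm _ _
  re_inner_nonneg v := _root_.inner_self_nonneg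
  add_left u v w := by simp only [map_add, _root_.inner_add_left]
  smul_left u v r := by simp only [_root_.map_smul, _root_.inner_smul_left]
  definite v h := hf <| by rw [map_zero]; exact _root_.inner_self_eq_zero.mp h

theorem InnerProductSpace.Core.comap_inner (f : V →ₗ[𝕜] E) (hf : Function.Injective f)
    (v w : V) :
    (comap f hf).inner v w = Inner.inner 𝕜 (f v) (f w) := rfl

theorem Subgroup.exists_invariant_innerProductCore [FiniteDimensional 𝕜 V]
    {G : Subgroup (V ≃ₗ[𝕜] V)} (hG : (G : Set (V ≃ₗ[𝕜] V)).Finite) :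
    ∃ c : InnerProductSpace.Core 𝕜 V,
      ∀ g ∈ G, ∀ v w : V, c.inner (g v) (g w) = c.inner v w := by
  have : Fintype G := hG.fintype
  let e := (finBasis 𝕜 V).equivFun ≪≫ₗ (WithLp.linearEquiv 2 𝕜 _).symm
  -- The inner product of `F v` and `F w` is `∑ h : G, ⟪e (h v), e (h w)⟫`, an average over `G`.
  let F : V →ₗ[𝕜] PiLp 2 (fun _ : G => EuclideanSpace 𝕜 (Fin (finrank 𝕜 V))) :=
    (WithLp.linearEquiv 2 𝕜 _).symm.toLinearMap ∘ₗ
      LinearMap.pi fun h : G => e.toLinearMap ∘ₗ (h : V ≃ₗ[𝕜] V).toLinearMap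
  have hF_apply (v : V) (h : G) : (F v).ofLp h = e ((h : V ≃ₗ[𝕜] V) v) := rfl
  have hF : Function.Injective F := fun v w hvw =>
    e.injective (congrArg (fun x => x.ofLp (1 : G)) hvw)
  refine ⟨.comap F hF, fun g hg v w => ?_⟩
  rw [InnerProductSpace.Core.comap_inner, InnerProductSpace.Core.comap_inner, PiLp.inner_apply,
    PiLp.inner_apply]
  exact Fintype.sum_equiv (Equiv.mulRight ⟨g, hg⟩) _ _ fun h => by
    simp only [hF_apply, Equiv.coe_mulRight, Subgroup.coe_mul, LinearEquiv.mul_apply]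

end InvariantInnerProduct

/-- Every irreducible finite-dimensional complex representation `ρ` of a finite quandle
`Q` on a nonzero space can be twisted by a quandle character `χ` so that `x ↦ χ(x)·ρ(x)`
is an irreducible quandle representation that is unitary for some inner product. -/
theorem irreducible_quandle_rep_twist_unitary
    {Q : Type} [Quandle Q] [Finite Q] {V : Type} [AddCommGroup V] [Module ℂ V]
    [FiniteDimensional ℂ V] [Nontrivial V]
    (ρ : Q → V ≃ₗ[ℂ] V) (hrep : IsQuandleRep ρ) (hirr : IsIrreducibleQuandleRep ρ) :
    ∃ χ : Q → ℂˣ, (∀ x y : Q, χ (x ◃ y) = χ y) ∧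
      ∃ σ : Q → V ≃ₗ[ℂ] V,
        (∀ (x : Q) (v : V), σ x v = (χ x : ℂ) • ρ x v) ∧
        IsQuandleRep σ ∧ IsIrreducibleQuandleRep σ ∧
        ∃ c : InnerProductSpace.Core ℂ V,
          ∀ (x : Q) (v w : V), c.inner (σ x v) (σ x w) = c.inner v w := by
  have hn : finrank ℂ V ≠ 0 := finrank_pos.ne'
  choose r hr using fun u : ℂˣ => IsAlgClosed.exists_units_pow_eq u⁻¹ hn
  let χ x := r (LinearEquiv.det (ρ x))
  have hχ (x y : Q) : χ (x ◃ y) = χ y := by simp only [χ, hrep.det_act]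
  have hdet (x : Q) : LinearEquiv.det (twistByChar χ ρ x) = 1 := by
    rw [det_twistByChar, hr, inv_mul_cancel]
  obtain ⟨c, hc⟩ := Subgroup.exists_invariant_innerProductCore
    ((hrep.twistByChar hχ).finite_closure_range (hirr.twistByChar χ) hdet)
  exact ⟨χ, hχ, twistByChar χ ρ, fun _ _ => rfl, hrep.twistByChar hχ, hirr.twistByChar χ, c,
    fun x => hc _ (subset_closure ⟨x, rfl⟩)⟩
end
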